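/- Let m be a positive even integer and b, μ real numbers. Let B be the m×m complex matrix with diagonal entries B_{s,s} = 2ι b cos(sπ/(m+1)) for s = 1, …, m, anti-diagonal entries B_{s,m+1-s} = (-1)^{m-s} ι^m μ for s = 1, …, m, and zeros elsewhere. Then for every complex number t, det( t·I_m - B ) = ∏_{s=1}^{m/2} ( t^2 + 4 b^2 cos^2(sπ/(m+1)) + μ^2 ). In particular the eigenvalues of B are ± ι √( 4b^2 cos^2(sπ/(m+1)) + μ^2 ) for s = 1, …, m/2. -/

import Mathlib

/-- The `m × m` matrix `B` with diagonal entries `B_{s,s} = 2 ι b cos(sπ/(m+1))`,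
anti-diagonal entries `B_{s,m+1-s} = (-1)^{m-s} ι^m μ` (1-based indexing) and zeros
elsewhere.  Since `m` is even the diagonal and anti-diagonal do not meet. -/
noncomputable def Bmat (m : ℕ) (b μ : ℝ) : Matrix (Fin m) (Fin m) ℂ :=
  Matrix.of fun i j =>
    if i = j then
      2 * Complex.I * (b : ℂ) *
        ((Real.cos (((i : ℕ) + 1) * Real.pi / ((m : ℝ) + 1)) : ℝ) : ℂ)
    else if (i : ℕ) + (j : ℕ) + 1 = m then
      (-1) ^ (m - 1 - (i : ℕ)) * Complex.I ^ m * (μ : ℂ)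
    else 0

/-!
Pairing each index `s` with its mirror image `m - 1 - s` makes `t • 1 - B` block diagonal with
`2 × 2` blocks. Since `cos ((m - s) π / (m + 1)) = - cos ((s + 1) π / (m + 1))`, the diagonal of a
block is `t ∓ 2 ι b cos ((s + 1) π / (m + 1))`, and since `m` is even its two anti-diagonal entries
multiply to `-μ²`; so each block has determinant `t² + 4 b² cos² ((s + 1) π / (m + 1)) + μ²`.
-/

lemma Fin.prod_univ_add_one_eq_prod_Icc {M : Type*} [CommMonoid M] (f : ℕ → M) (n : ℕ) :
    ∏ s : Fin n, f (s + 1) = ∏ s ∈ Finset.Icc 1 n, f s := by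
  rw [Fin.prod_univ_eq_prod_range (fun s => f (s + 1)), Finset.range_eq_Ico,
    Finset.prod_Ico_add', zero_add, Finset.Ico_add_one_right_eq_Icc]

lemma Fin.ne_rev_of_even {m : ℕ} (hm : Even m) (i : Fin m) : i ≠ i.rev := fun h => by
  have := congrArg Fin.val h
  simp only [Fin.val_rev] at this
  obtain ⟨k, rfl⟩ := hm
  omega

def Fin.mirrorPairEquiv (n : ℕ) : Fin 2 × Fin n ≃ Fin (n + n) :=
  (Equiv.prodCongrLeft fun _ => finTwoEquiv).trans <| (Equiv.boolProdEquivSum _).trans <|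
    (Equiv.sumCongr (Equiv.refl _) Fin.revPerm).trans finSumFinEquiv

@[simp]
lemma Fin.mirrorPairEquiv_zero {n : ℕ} (s : Fin n) :
    Fin.mirrorPairEquiv n (0, s) = Fin.castAdd n s :=
  rfl

@[simp]
lemma Fin.mirrorPairEquiv_one {n : ℕ} (s : Fin n) :
    Fin.mirrorPairEquiv n (1, s) = (Fin.castAdd n s).rev := by
  ext
  simp [Fin.mirrorPairEquiv, finTwoEquiv]
  omega

theorem Matrix.det_eq_prod_of_eq_zero_off_diag_antidiag {R : Type*} [CommRing R] {n : ℕ}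
    (A : Matrix (Fin (n + n)) (Fin (n + n)) R) (hA : ∀ i j, i ≠ j → i ≠ j.rev → A i j = 0) :
    A.det = ∏ s : Fin n,
      (A (Fin.castAdd n s) (Fin.castAdd n s) * A (Fin.castAdd n s).rev (Fin.castAdd n s).rev -
        A (Fin.castAdd n s) (Fin.castAdd n s).rev * A (Fin.castAdd n s).rev (Fin.castAdd n s)) := by
  have hblock : A.submatrix (Fin.mirrorPairEquiv n) (Fin.mirrorPairEquiv n) =
      Matrix.blockDiagonal fun s =>
        !![A (Fin.castAdd n s) (Fin.castAdd n s), A (Fin.castAdd n s) (Fin.castAdd n s).rev;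
          A (Fin.castAdd n s).rev (Fin.castAdd n s),
            A (Fin.castAdd n s).rev (Fin.castAdd n s).rev] := by
    ext ⟨k, s⟩ ⟨l, s'⟩
    rcases eq_or_ne s s' with rfl | hss'
    · fin_cases k <;> fin_cases l <;> simp
    · rw [Matrix.submatrix_apply, Matrix.blockDiagonal_apply_ne _ _ _ hss']
      apply hA <;> fin_cases k <;> fin_cases l <;> simp [Fin.ext_iff] at hss' ⊢ <;> omega
  rw [← Matrix.det_submatrix_equiv_self (Fin.mirrorPairEquiv n), hblock,
    Matrix.det_blockDiagonal]
  simp [Matrix.det_fin_two_of]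

lemma cos_rev_add_one_mul_pi_div {m : ℕ} (i : Fin m) :
    Real.cos (((i.rev : ℕ) + 1) * Real.pi / ((m : ℝ) + 1)) =
      -Real.cos (((i : ℕ) + 1) * Real.pi / ((m : ℝ) + 1)) := by
  have hrev : ((i.rev : ℕ) : ℝ) + 1 = ((m : ℝ) + 1) - ((i : ℕ) + 1) := by
    rw [Fin.val_rev, Nat.cast_sub (by omega)]
    push_cast
    ring
  rw [hrev, sub_mul, sub_div, mul_div_cancel_left₀ _ (by positivity), Real.cos_pi_sub]

section Bmat

variable {m : ℕ} (b μ : ℝ)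

lemma Bmat_apply_self (i : Fin m) :
    Bmat m b μ i i = 2 * Complex.I * b * Real.cos (((i : ℕ) + 1) * Real.pi / ((m : ℝ) + 1)) := by
  simp [Bmat]

lemma Bmat_apply_of_ne_of_ne_rev {i j : Fin m} (hij : i ≠ j) (hij' : i ≠ j.rev) :
    Bmat m b μ i j = 0 := by
  have hsum : (i : ℕ) + j + 1 ≠ m := fun h => hij' (by ext; simp; omega)
  simp [Bmat, hij, hsum]

lemma Bmat_apply_rev {i : Fin m} (hi : i ≠ i.rev) :
    Bmat m b μ i i.rev = (-1) ^ (m - 1 - (i : ℕ)) * Complex.I ^ m * μ := by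
  have hsum : (i : ℕ) + i.rev + 1 = m := by simp; omega
  simp only [Bmat, Matrix.of_apply, if_neg hi, if_pos hsum]

lemma Bmat_apply_rev_mul_Bmat_rev_apply (hm : Even m) (i : Fin m) :
    Bmat m b μ i i.rev * Bmat m b μ i.rev i = -(μ : ℂ) ^ 2 := by
  have hi := Fin.ne_rev_of_even hm i
  have hsign : (-1 : ℂ) ^ (m - 1 - (i : ℕ)) * (-1) ^ (m - 1 - (i.rev : ℕ)) = -1 := by
    rw [← pow_add, show m - 1 - i + (m - 1 - i.rev) = m - 1 by simp; omega]
    exact (Nat.Even.sub_odd (by omega) hm odd_one).neg_one_pow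
  have hI : Complex.I ^ m * Complex.I ^ m = 1 := by
    rw [← pow_add, ← two_mul, pow_mul, Complex.I_sq, hm.neg_one_pow]
  have hrev := Bmat_apply_rev b μ (i := i.rev) (by rwa [Fin.rev_rev, ne_comm])
  rw [Fin.rev_rev] at hrev
  rw [Bmat_apply_rev b μ hi, hrev]
  linear_combination (μ : ℂ) ^ 2 * (Complex.I ^ m * Complex.I ^ m * hsign - hI)

end Bmat

theorem det_smul_one_sub_Bmat_general (m : ℕ) (hm : Even m) (b μ : ℝ) (t : ℂ) :
    (t • (1 : Matrix (Fin m) (Fin m) ℂ) - Bmat m b μ).det =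
      ∏ s ∈ Finset.Icc 1 (m / 2),
        (t ^ 2 + ((4 * b ^ 2 * Real.cos ((s : ℝ) * Real.pi / ((m : ℝ) + 1)) ^ 2
          + μ ^ 2 : ℝ) : ℂ)) := by
  obtain ⟨n, rfl⟩ := id hm
  rw [Matrix.det_eq_prod_of_eq_zero_off_diag_antidiag _ fun i j hij hij' => by
      simp [Matrix.sub_apply, Matrix.one_apply_ne hij, Bmat_apply_of_ne_of_ne_rev b μ hij hij'],
    show (n + n) / 2 = n by omega, ← Fin.prod_univ_add_one_eq_prod_Icc]
  refine Finset.prod_congr rfl fun s _ => ?_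
  have hne := Fin.ne_rev_of_even hm (Fin.castAdd n s)
  simp only [Matrix.sub_apply, Matrix.smul_apply, Matrix.one_apply_eq, Matrix.one_apply_ne hne,
    Matrix.one_apply_ne hne.symm, smul_eq_mul, mul_one, mul_zero, zero_sub, Bmat_apply_self,
    cos_rev_add_one_mul_pi_div, Fin.val_castAdd, Nat.cast_add_one, Complex.ofReal_add,
    Complex.ofReal_neg, Complex.ofReal_mul, Complex.ofReal_pow, Complex.ofReal_ofNat]
  set c : ℝ := Real.cos (((s : ℕ) + 1) * Real.pi / ((n + n : ℕ) + 1))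
  linear_combination (-4 * (b : ℂ) ^ 2 * (c : ℂ) ^ 2) * Complex.I_sq
    - Bmat_apply_rev_mul_Bmat_rev_apply b μ hm (Fin.castAdd n s)

/-- For `m` even, the characteristic polynomial of `B` factors as
`det(t I_m - B) = ∏_{s=1}^{m/2} (t² + 4b² cos²(sπ/(m+1)) + μ²)`, so the eigenvalues of `B`
are `± ι √(4b² cos²(sπ/(m+1)) + μ²)` for `s = 1, …, m/2`. -/
theorem det_smul_one_sub_Bmat (m : ℕ) (hm : Even m) (hm0 : 0 < m) (b μ : ℝ) (t : ℂ) :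
    (t • (1 : Matrix (Fin m) (Fin m) ℂ) - Bmat m b μ).det =
      ∏ s ∈ Finset.Icc 1 (m / 2),
        (t ^ 2 + ((4 * b ^ 2 * Real.cos ((s : ℝ) * Real.pi / ((m : ℝ) + 1)) ^ 2
          + μ ^ 2 : ℝ) : ℂ)) :=
  det_smul_one_sub_Bmat_general m hm b μ t
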